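/- For discrete random variables Y, E, G and R with R a deterministic function of G, and for any β ∈ [0,1], the objective -I(Y;R) + β·I(R; E, G) equals (1-β)·I(Y; G | R) + β·I(R; E, G | Y) + C, where C = -I(Y;G) + β·I(Y; E, G) - β·I(Y; E | G) does not depend on the choice of R. -/

import Mathlib

/-!
Everything follows from the chain rule `I(X; U, V) = I(X; U) + I(X; V | U)` together with the
vanishing of `I(X; Y | Z)` when `X` is a function of `Z`. Since `R` is a function of `G`,
expanding `I(Y; G, R)` in both orders gives `I(Y; G | R) = I(Y; G) - I(Y; R)`, and expanding
`I(R; E, G, Y)` in both orders gives `I(R; E, G | Y) = I(R; E, G) - I(R; Y)`. Substituting these and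
`I(Y; E, G) = I(Y; G) + I(Y; E | G)` turns the claim into a linear identity.
-/

open Finset Real

/-- Probability that random variable `X` (on finite sample space `Ω` with weights `μ`)
takes the value `x`. -/
noncomputable def pOf {Ω : Type*} [Fintype Ω] (μ : Ω → ℝ) {α : Type*} [DecidableEq α]
    (X : Ω → α) (x : α) : ℝ :=
  ∑ ω, if X ω = x then μ ω else 0

/-- Mutual information of discrete random variables
`I(X;Y) = ∑_{x,y} p(x,y) log (p(x,y) / (p(x) p(y)))`. -/
noncomputable def MI {Ω : Type*} [Fintype Ω] {α β : Type*} [Fintype α] [Fintype β]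
    [DecidableEq α] [DecidableEq β] (μ : Ω → ℝ) (X : Ω → α) (Y : Ω → β) : ℝ :=
  ∑ x : α, ∑ y : β,
    pOf μ (fun ω => (X ω, Y ω)) (x, y) *
      Real.log (pOf μ (fun ω => (X ω, Y ω)) (x, y) / (pOf μ X x * pOf μ Y y))

/-- Conditional mutual information of discrete random variables
`I(X;Y|Z) = ∑ p(x,y,z) log (p(x,y,z) p(z) / (p(x,z) p(y,z)))`. -/
noncomputable def condMI {Ω : Type*} [Fintype Ω] {α β γ : Type*} [Fintype α] [Fintype β] [Fintype γ]
    [DecidableEq α] [DecidableEq β] [DecidableEq γ]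
    (μ : Ω → ℝ) (X : Ω → α) (Y : Ω → β) (Z : Ω → γ) : ℝ :=
  ∑ x : α, ∑ y : β, ∑ z : γ,
    pOf μ (fun ω => (X ω, Y ω, Z ω)) (x, y, z) *
      Real.log (pOf μ (fun ω => (X ω, Y ω, Z ω)) (x, y, z) * pOf μ Z z /
        (pOf μ (fun ω => (X ω, Z ω)) (x, z) * pOf μ (fun ω => (Y ω, Z ω)) (y, z)))

/-- Shannon entropy `H(X) = -∑ p(x) log p(x)` of a discrete random variable. -/
noncomputable def entropy {Ω : Type*} [Fintype Ω] {α : Type*} [Fintype α] [DecidableEq α]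
    (μ : Ω → ℝ) (X : Ω → α) : ℝ :=
  -∑ x : α, pOf μ X x * Real.log (pOf μ X x)

lemma log_div_eq_log_div_add_log_div {p px pu pxu puv : ℝ} (hp : p ≠ 0) (hx : px ≠ 0)
    (hu : pu ≠ 0) (hxu : pxu ≠ 0) (huv : puv ≠ 0) :
    log (p / (px * puv)) = log (pxu / (px * pu)) + log (p * pu / (pxu * puv)) := by
  rw [← log_mul (by positivity) (by positivity)]
  congr 1
  field_simp

section InformationTheory

variable {Ω : Type*} [Fintype Ω] {μ : Ω → ℝ}

lemma pOf_nonneg (hμ : ∀ ω, 0 ≤ μ ω) {α : Type*} [DecidableEq α] (X : Ω → α) (x : α) :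
    0 ≤ pOf μ X x :=
  sum_nonneg fun ω _ => by split <;> simp [hμ ω]

lemma pOf_congr {α α' : Type*} [DecidableEq α] [DecidableEq α'] {F : Ω → α} {F' : Ω → α'}
    {a : α} {a' : α'} (h : ∀ ω, F ω = a ↔ F' ω = a') : pOf μ F a = pOf μ F' a' :=
  sum_congr rfl fun ω _ => by simp only [h ω]

lemma pOf_mono (hμ : ∀ ω, 0 ≤ μ ω) {α α' : Type*} [DecidableEq α] [DecidableEq α']
    {F : Ω → α} {F' : Ω → α'} {a : α} {a' : α'} (h : ∀ ω, F ω = a → F' ω = a') :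
    pOf μ F a ≤ pOf μ F' a' := by
  refine sum_le_sum fun ω _ => ?_
  by_cases hF : F ω = a
  · simp [hF, h ω hF]
  · simp only [if_neg hF]
    split <;> simp [hμ ω]

lemma pOf_pos_of_imp (hμ : ∀ ω, 0 ≤ μ ω) {α α' : Type*} [DecidableEq α] [DecidableEq α']
    {F : Ω → α} {F' : Ω → α'} {a : α} {a' : α'} (hpos : 0 < pOf μ F a)
    (h : ∀ ω, F ω = a → F' ω = a') : 0 < pOf μ F' a' :=
  hpos.trans_le (pOf_mono hμ h)

lemma pOf_eq_zero {α : Type*} [DecidableEq α] {F : Ω → α} {a : α} (h : ∀ ω, F ω ≠ a) :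
    pOf μ F a = 0 :=
  sum_eq_zero fun ω _ => by simp [h ω]

lemma sum_pOf_prod {α γ : Type*} [DecidableEq α] [DecidableEq γ] [Fintype γ]
    (F : Ω → α) (V : Ω → γ) (a : α) :
    ∑ v, pOf μ (fun ω => (F ω, V ω)) (a, v) = pOf μ F a := by
  unfold pOf
  rw [sum_comm]
  refine sum_congr rfl fun ω _ => ?_
  simp [Prod.ext_iff, ite_and, sum_ite_eq]

variable {α β γ ρ : Type*} [Fintype α] [Fintype β] [Fintype γ] [Fintype ρ]
    [DecidableEq α] [DecidableEq β] [DecidableEq γ] [DecidableEq ρ]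

lemma MI_comm (X : Ω → α) (Y : Ω → β) : MI μ X Y = MI μ Y X := by
  unfold MI
  rw [sum_comm]
  refine sum_congr rfl fun y _ => sum_congr rfl fun x _ => ?_
  rw [pOf_congr (F' := fun ω => (Y ω, X ω)) (a' := (y, x))
    (fun ω => by simp [Prod.ext_iff, and_comm]), mul_comm (pOf μ X x)]

lemma MI_prod_comm (X : Ω → α) (U : Ω → β) (V : Ω → γ) :
    MI μ X (fun ω => (U ω, V ω)) = MI μ X (fun ω => (V ω, U ω)) := by
  unfold MI
  refine sum_congr rfl fun x _ => ?_
  rw [Fintype.sum_prod_type, sum_comm, Fintype.sum_prod_type]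
  refine sum_congr rfl fun v _ => sum_congr rfl fun u _ => ?_
  rw [pOf_congr (F := fun ω => (X ω, U ω, V ω)) (F' := fun ω => (X ω, V ω, U ω))
      (a' := (x, v, u)) (fun ω => by simp [Prod.ext_iff]; tauto),
    pOf_congr (F := fun ω => (U ω, V ω)) (F' := fun ω => (V ω, U ω)) (a' := (v, u))
      (fun ω => by simp [Prod.ext_iff, and_comm])]

lemma condMI_comm (X : Ω → α) (Y : Ω → β) (Z : Ω → γ) :
    condMI μ X Y Z = condMI μ Y X Z := by
  unfold condMI
  rw [sum_comm]
  refine sum_congr rfl fun y _ => sum_congr rfl fun x _ => sum_congr rfl fun z _ => ?_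
  rw [pOf_congr (F' := fun ω => (Y ω, X ω, Z ω)) (a' := (y, x, z))
    (fun ω => by simp [Prod.ext_iff]; tauto), mul_comm (pOf μ (fun ω => (X ω, Z ω)) (x, z))]

lemma MI_prod_eq_add_condMI (hμ : ∀ ω, 0 ≤ μ ω) (X : Ω → α) (U : Ω → β) (V : Ω → γ) :
    MI μ X (fun ω => (U ω, V ω)) = MI μ X U + condMI μ X V U := by
  set p : α → β → γ → ℝ := fun x u v => pOf μ (fun ω => (X ω, U ω, V ω)) (x, u, v)
  have hMI : MI μ X U = ∑ x, ∑ u, ∑ v,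
      p x u v * log (pOf μ (fun ω => (X ω, U ω)) (x, u) / (pOf μ X x * pOf μ U u)) := by
    refine sum_congr rfl fun x _ => sum_congr rfl fun u _ => ?_
    rw [← sum_mul, ← sum_pOf_prod (fun ω => (X ω, U ω)) V (x, u)]
    congr 1
    exact sum_congr rfl fun v _ => pOf_congr fun ω => by simp [Prod.ext_iff]; tauto
  have hcondMI : condMI μ X V U = ∑ x, ∑ u, ∑ v, p x u v * log (p x u v * pOf μ U u /
      (pOf μ (fun ω => (X ω, U ω)) (x, u) * pOf μ (fun ω => (U ω, V ω)) (u, v))) := by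
    refine sum_congr rfl fun x _ => ?_
    rw [sum_comm]
    refine sum_congr rfl fun u _ => sum_congr rfl fun v _ => ?_
    rw [pOf_congr (F' := fun ω => (X ω, U ω, V ω)) (a' := (x, u, v))
        (fun ω => by simp [Prod.ext_iff]; tauto),
      pOf_congr (F := fun ω => (V ω, U ω)) (F' := fun ω => (U ω, V ω)) (a' := (u, v))
        (fun ω => by simp [Prod.ext_iff, and_comm])]
  have hMIprod : MI μ X (fun ω => (U ω, V ω)) = ∑ x, ∑ u, ∑ v, p x u v *
      log (p x u v / (pOf μ X x * pOf μ (fun ω => (U ω, V ω)) (u, v))) :=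
    sum_congr rfl fun x _ => Fintype.sum_prod_type _
  rw [hMIprod, hMI, hcondMI, ← sum_add_distrib]
  refine sum_congr rfl fun x _ => ?_
  rw [← sum_add_distrib]
  refine sum_congr rfl fun u _ => ?_
  rw [← sum_add_distrib]
  refine sum_congr rfl fun v _ => ?_
  rw [← mul_add]
  have hp : 0 ≤ p x u v := pOf_nonneg hμ _ _
  rcases hp.eq_or_lt with h0 | hpos
  · rw [← h0, zero_mul, zero_mul]
  · have hX : 0 < pOf μ X x :=
      pOf_pos_of_imp hμ hpos fun ω h => by simp [Prod.ext_iff] at h; tauto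
    have hU : 0 < pOf μ U u :=
      pOf_pos_of_imp hμ hpos fun ω h => by simp [Prod.ext_iff] at h; tauto
    have hXU : 0 < pOf μ (fun ω => (X ω, U ω)) (x, u) :=
      pOf_pos_of_imp hμ hpos fun ω h => by simp [Prod.ext_iff] at h ⊢; tauto
    have hUV : 0 < pOf μ (fun ω => (U ω, V ω)) (u, v) :=
      pOf_pos_of_imp hμ hpos fun ω h => by simp [Prod.ext_iff] at h ⊢; tauto
    rw [log_div_eq_log_div_add_log_div hpos.ne' hX.ne' hU.ne' hXU.ne' hUV.ne']

lemma condMI_fun_left_eq_zero (Y : Ω → β) (Z : Ω → γ) (τ : γ → ρ) :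
    condMI μ (fun ω => τ (Z ω)) Y Z = 0 := by
  refine sum_eq_zero fun r _ => sum_eq_zero fun y _ => sum_eq_zero fun z _ => ?_
  by_cases hr : r = τ z
  · subst hr
    rw [pOf_congr (F := fun ω => (τ (Z ω), Y ω, Z ω)) (F' := fun ω => (Y ω, Z ω)) (a' := (y, z))
        (fun ω => by simp [Prod.ext_iff]; tauto),
      pOf_congr (F := fun ω => (τ (Z ω), Z ω)) (F' := Z) (a' := z)
        (fun ω => by simp [Prod.ext_iff]; tauto),
      mul_comm (pOf μ Z z)]
    -- `log (a / a) = 0` also when `a = 0`, since then `a / a = 0`.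
    by_cases h0 : pOf μ (fun ω => (Y ω, Z ω)) (y, z) * pOf μ Z z = 0
    · simp [h0]
    · simp [div_self h0]
  · rw [pOf_eq_zero fun ω h => hr (by simp only [Prod.ext_iff] at h; rw [← h.1, h.2.2]), zero_mul]

lemma condMI_fun_right_eq_zero (X : Ω → α) (Z : Ω → γ) (τ : γ → ρ) :
    condMI μ X (fun ω => τ (Z ω)) Z = 0 := by
  rw [condMI_comm, condMI_fun_left_eq_zero]

lemma condMI_cond_fun_eq_sub (hμ : ∀ ω, 0 ≤ μ ω) (X : Ω → α) (Z : Ω → γ) (τ : γ → ρ) :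
    condMI μ X Z (fun ω => τ (Z ω)) = MI μ X Z - MI μ X (fun ω => τ (Z ω)) := by
  have h := MI_prod_eq_add_condMI hμ X (fun ω => τ (Z ω)) Z
  rw [MI_prod_comm, MI_prod_eq_add_condMI hμ, condMI_fun_right_eq_zero] at h
  linarith

lemma condMI_fun_left_eq_sub (hμ : ∀ ω, 0 ≤ μ ω) (Y : Ω → β) (Z : Ω → γ) (τ : γ → ρ) :
    condMI μ (fun ω => τ (Z ω)) Z Y = MI μ (fun ω => τ (Z ω)) Z - MI μ (fun ω => τ (Z ω)) Y := by
  have h := MI_prod_eq_add_condMI hμ (fun ω => τ (Z ω)) Y Z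
  rw [MI_prod_comm, MI_prod_eq_add_condMI hμ, condMI_fun_left_eq_zero] at h
  linarith

end InformationTheory

theorem tgib_objective_decomposition_general {Ω α β' γ ρ : Type*} [Fintype Ω] [Fintype α]
    [Fintype β'] [Fintype γ] [Fintype ρ]
    [DecidableEq α] [DecidableEq β'] [DecidableEq γ] [DecidableEq ρ]
    (μ : Ω → ℝ) (hμ : ∀ ω, 0 ≤ μ ω)
    (Y : Ω → α) (E : Ω → β') (G : Ω → γ) (σ : γ → ρ)
    (β : ℝ) :
    -MI μ Y (fun ω => σ (G ω))
        + β * MI μ (fun ω => σ (G ω)) (fun ω => (E ω, G ω))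
      = (1 - β) * condMI μ Y G (fun ω => σ (G ω))
        + β * condMI μ (fun ω => σ (G ω)) (fun ω => (E ω, G ω)) Y
        + (-MI μ Y G + β * MI μ Y (fun ω => (E ω, G ω)) - β * condMI μ Y E G) := by
  have hR : condMI μ (fun ω => σ (G ω)) (fun ω => (E ω, G ω)) Y
      = MI μ (fun ω => σ (G ω)) (fun ω => (E ω, G ω)) - MI μ (fun ω => σ (G ω)) Y :=
    condMI_fun_left_eq_sub hμ Y (fun ω => (E ω, G ω)) (fun p => σ p.2)
  rw [condMI_cond_fun_eq_sub hμ Y G σ, hR, MI_comm (fun ω => σ (G ω)) Y, MI_prod_comm Y E G,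
    MI_prod_eq_add_condMI hμ Y G E]
  ring

/-- Chain-rule decomposition of the TGIB objective: for `R = σ(G)` a deterministic
function of `G` and `β ∈ [0,1]`,
`-I(Y;R) + β·I(R;E,G) = (1-β)·I(Y;G|R) + β·I(R;E,G|Y) + C` where
`C = -I(Y;G) + β·I(Y;E,G) - β·I(Y;E|G)` does not depend on `R`. -/
theorem tgib_objective_decomposition {Ω α β' γ ρ : Type*} [Fintype Ω] [Fintype α]
    [Fintype β'] [Fintype γ] [Fintype ρ]
    [DecidableEq α] [DecidableEq β'] [DecidableEq γ] [DecidableEq ρ]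
    (μ : Ω → ℝ) (hμ : ∀ ω, 0 ≤ μ ω) (hsum : ∑ ω, μ ω = 1)
    (Y : Ω → α) (E : Ω → β') (G : Ω → γ) (σ : γ → ρ)
    (β : ℝ) (hβ : β ∈ Set.Icc (0 : ℝ) 1) :
    -MI μ Y (fun ω => σ (G ω))
        + β * MI μ (fun ω => σ (G ω)) (fun ω => (E ω, G ω))
      = (1 - β) * condMI μ Y G (fun ω => σ (G ω))
        + β * condMI μ (fun ω => σ (G ω)) (fun ω => (E ω, G ω)) Y
        + (-MI μ Y G + β * MI μ Y (fun ω => (E ω, G ω)) - β * condMI μ Y E G) :=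
  tgib_objective_decomposition_general μ hμ Y E G σ β
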